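/- Let R ∈ ℝ. The restriction of the 3-form Dx to the level hypersurface {X ∈ H_ℝ : N(X) = R} equals (X/‖X‖)·dS, and the restriction of Dx to the sphere {X ∈ H_ℝ : ‖X‖ = R} equals (X⁻/‖X‖)·dS = (X⁻/R)·dS, where both hypersurfaces are oriented as boundaries of {N(X) < R} and {‖X‖ < R} respectively and dS denotes the restriction of the Euclidean surface measure of H_ℝ. -/

import Mathlib

/-! The restrictions are stated pointwise: for tangent vectors τ₁, τ₂, τ₃ at a point of the
hypersurface, with n its outward Euclidean unit normal, dS(τ₁,τ₂,τ₃) = dV(n,τ₁,τ₂,τ₃).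

The coefficients of Dx(τ) are, up to the sign pattern of `Jr`, the cofactors
c_p = dV(e_p, τ) of the tangent vectors, i.e. the generalized cross product c with
dV(u, τ) = ⟨u, c⟩. Since dV(u, τ) = 0 for every u orthogonal to the normal n, the vector c is
parallel to n, and ⟨n, c⟩ = dV(n, τ) gives c = dV(n, τ) n for a unit normal, so
Dx(τ) = dV(n, τ) · φR(Jr n). On {N = R} the normal is proportional to Jr X and `Jr` undoes
itself, giving X; on the sphere the normal is X, and φR(Jr X) = X⁻. -/

noncomputable section
open Matrix Complex

abbrev HC : Type := Matrix (Fin 2) (Fin 2) ℂ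

def e0 : HC := 1
def e3 : HC := !![-I, 0; 0, I]
def et1 : HC := !![0, 1; 1, 0]
def et2 : HC := !![0, I; -I, 0]

def φR (x : Fin 4 → ℝ) : HC := x 0 • e0 + x 1 • et1 + x 2 • et2 + x 3 • e3

def invol (Z : HC) : HC := - (e3 * Z * e3)

/-- N(X) = (x⁰)² − (x¹)² − (x²)² + (x³)². -/
def Ns (x : Fin 4 → ℝ) : ℝ := x 0 ^ 2 - x 1 ^ 2 - x 2 ^ 2 + x 3 ^ 2

/-- The Euclidean norm ‖X‖ = √((x⁰)² + (x¹)² + (x²)² + (x³)²). -/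
def enorm4 (x : Fin 4 → ℝ) : ℝ := Real.sqrt (x 0 ^ 2 + x 1 ^ 2 + x 2 ^ 2 + x 3 ^ 2)

/-- The Euclidean inner product on ℝ⁴. -/
def dot (x y : Fin 4 → ℝ) : ℝ := ∑ i : Fin 4, x i * y i

/-- The signature involution (x⁰,x¹,x²,x³) ↦ (x⁰,−x¹,−x²,x³); ∇N(X) = 2·J X,
so J X is an outward normal direction for {N < R} and ‖J X‖ = ‖X‖. -/
def Jr (x : Fin 4 → ℝ) : Fin 4 → ℝ := fun i => ![1, -1, -1, 1] i * x i

def rdet3 (u : Fin 3 → (Fin 4 → ℝ)) (p q r : Fin 4) : ℝ :=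
  Matrix.det !![u 0 p, u 1 p, u 2 p; u 0 q, u 1 q, u 2 q; u 0 r, u 1 r, u 2 r]

/-- Dx = e₀ dx¹∧dx²∧dx³ + ẽ₁ dx⁰∧dx²∧dx³ − ẽ₂ dx⁰∧dx¹∧dx³ − e₃ dx⁰∧dx¹∧dx². -/
def Dx (u : Fin 3 → (Fin 4 → ℝ)) : HC :=
  rdet3 u 1 2 3 • e0 + rdet3 u 0 2 3 • et1 - rdet3 u 0 1 3 • et2 - rdet3 u 0 1 2 • e3

/-- dV(v₀,v₁,v₂,v₃): the volume form with dV(e₀,ẽ₁,ẽ₂,e₃) = 1. -/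
def dV4 (v : Fin 4 → (Fin 4 → ℝ)) : ℝ := Matrix.det (Matrix.of fun p j => v j p)


section Cofactor

variable {K : Type*} [CommRing K] {n : ℕ}

def cofactorVec (τ : Fin n → Fin (n + 1) → K) : Fin (n + 1) → K :=
  fun p => det (of (Fin.cons (Pi.single p 1) τ))

theorem det_cons_eq_dotProduct_cofactorVec (u : Fin (n + 1) → K) (τ : Fin n → Fin (n + 1) → K) :
    det (of (Fin.cons u τ)) = u ⬝ᵥ cofactorVec τ := by
  have hminor (w : Fin (n + 1) → K) (j : Fin (n + 1)) :
      (of (Fin.cons w τ)).submatrix Fin.succ j.succAbove = (of τ).submatrix id j.succAbove := by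
    ext; simp
  simp only [cofactorVec, det_succ_row_zero, of_apply, Fin.cons_zero, hminor, dotProduct,
    Finset.mul_sum]
  refine Finset.sum_congr rfl fun j _ => ?_
  rw [Finset.sum_eq_single j (fun b _ hb => by simp [hb]) (by simp)]
  simp only [Pi.single_eq_same]
  ring

variable [IsDomain K]

theorem det_cons_eq_zero_of_dotProduct_eq_zero {v u : Fin (n + 1) → K} {τ : Fin n → Fin (n + 1) → K}
    (hv : v ≠ 0) (hu : v ⬝ᵥ u = 0) (hτ : ∀ k, v ⬝ᵥ τ k = 0) : det (of (Fin.cons u τ)) = 0 := by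
  refine exists_mulVec_eq_zero_iff.mp ⟨v, hv, funext fun i => ?_⟩
  refine Fin.cases ?_ (fun k => ?_) i
  · simpa [mulVec, dotProduct_comm] using hu
  · simpa [mulVec, dotProduct_comm] using hτ k

theorem dotProduct_self_smul_cofactorVec {v : Fin (n + 1) → K} {τ : Fin n → Fin (n + 1) → K}
    (hτ : ∀ k, v ⬝ᵥ τ k = 0) : (v ⬝ᵥ v) • cofactorVec τ = (v ⬝ᵥ cofactorVec τ) • v := by
  rcases eq_or_ne v 0 with rfl | hv
  · simp
  ext p
  have horth : v ⬝ᵥ ((v ⬝ᵥ v) • Pi.single p 1 - v p • v) = 0 := by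
    simp [dotProduct_sub]; ring
  have := det_cons_eq_zero_of_dotProduct_eq_zero hv horth hτ
  rw [det_cons_eq_dotProduct_cofactorVec, sub_dotProduct, smul_dotProduct, smul_dotProduct,
    single_one_dotProduct, sub_eq_zero] at this
  simpa [dotProduct_comm v, mul_comm] using this

end Cofactor

theorem dV4_eq_det (v : Fin 4 → Fin 4 → ℝ) : dV4 v = det (of v) :=
  det_transpose (of v)

theorem dV4_cons_smul (c : ℝ) (v : Fin 4 → ℝ) (τ : Fin 3 → Fin 4 → ℝ) :
    dV4 (Fin.cons (c • v) τ) = c * dV4 (Fin.cons v τ) := by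
  simp only [dV4_eq_det, det_cons_eq_dotProduct_cofactorVec, smul_dotProduct, smul_eq_mul]

theorem cofactorVec_eq_rdet3 (τ : Fin 3 → Fin 4 → ℝ) :
    cofactorVec τ = ![rdet3 τ 1 2 3, -rdet3 τ 0 2 3, rdet3 τ 0 1 3, -rdet3 τ 0 1 2] := by
  have hrows (w : Fin 4 → ℝ) : (Fin.cons w τ : Fin 4 → Fin 4 → ℝ) = ![w, τ 0, τ 1, τ 2] := by
    ext i; fin_cases i <;> rfl
  ext p
  fin_cases p <;> simp [cofactorVec, hrows, det_succ_row_zero, Fin.sum_univ_succ, rdet3,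
    Fin.succAbove, Pi.single_apply] <;> ring

theorem Jr_Jr (x : Fin 4 → ℝ) : Jr (Jr x) = x := by
  ext i; fin_cases i <;> simp [Jr]

theorem Jr_smul (c : ℝ) (x : Fin 4 → ℝ) : Jr (c • x) = c • Jr x := by
  ext i; simp only [Jr, Pi.smul_apply, smul_eq_mul]; ring

theorem Jr_ne_zero {x : Fin 4 → ℝ} (hx : x ≠ 0) : Jr x ≠ 0 := fun h =>
  hx (by rw [← Jr_Jr x, h]; ext i; simp [Jr])

theorem dotProduct_Jr_self (x : Fin 4 → ℝ) : Jr x ⬝ᵥ Jr x = x ⬝ᵥ x := by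
  simp [Jr, dotProduct, Fin.sum_univ_four]

theorem enorm4_sq (x : Fin 4 → ℝ) : enorm4 x ^ 2 = x ⬝ᵥ x := by
  rw [enorm4, Real.sq_sqrt (by positivity), dotProduct, Fin.sum_univ_four]; ring

theorem φR_smul (c : ℝ) (x : Fin 4 → ℝ) : φR (c • x) = c • φR x := by
  simp only [φR, Pi.smul_apply, smul_eq_mul, mul_smul, smul_add]

theorem φR_eq_of (x : Fin 4 → ℝ) :
    φR x = !![(x 0 : ℂ) - x 3 * I, x 1 + x 2 * I; x 1 - x 2 * I, x 0 + x 3 * I] := by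
  ext i j
  fin_cases i <;> fin_cases j <;> simp [φR, e0, e3, et1, et2] <;> ring

theorem invol_φR (x : Fin 4 → ℝ) : invol (φR x) = φR (Jr x) := by
  rw [invol, φR_eq_of, φR_eq_of, e3]
  simp [Jr]
  ring_nf
  simp only [I_sq, I_pow_three]
  ring_nf
  simp

theorem Dx_eq_φR_Jr_cofactorVec (τ : Fin 3 → Fin 4 → ℝ) : Dx τ = φR (Jr (cofactorVec τ)) := by
  rw [cofactorVec_eq_rdet3, Dx, φR]
  simp [Jr]
  module

theorem Dx_eq_of_dotProduct_eq_zero {v : Fin 4 → ℝ} (hv : v ≠ 0) {τ : Fin 3 → Fin 4 → ℝ}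
    (hτ : ∀ k, v ⬝ᵥ τ k = 0) : Dx τ = (dV4 (Fin.cons v τ) / (v ⬝ᵥ v)) • φR (Jr v) := by
  have hvv : v ⬝ᵥ v ≠ 0 := fun h => hv (dotProduct_self_eq_zero.mp h)
  have hc : cofactorVec τ = (dV4 (Fin.cons v τ) / (v ⬝ᵥ v)) • v := by
    rw [dV4_eq_det, det_cons_eq_dotProduct_cofactorVec, div_eq_inv_mul, mul_smul,
      ← dotProduct_self_smul_cofactorVec hτ, inv_smul_smul₀ hvv]
  rw [Dx_eq_φR_Jr_cofactorVec, hc, Jr_smul, φR_smul]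

theorem Dx_restrictions (R : ℝ) :
    -- on the hypersurface {N(X) = R}: Dx = (X/‖X‖)·dS
    (∀ x : Fin 4 → ℝ, Ns x = R → x ≠ 0 →
      ∀ τ : Fin 3 → (Fin 4 → ℝ), (∀ k, dot (Jr x) (τ k) = 0) →
        Dx τ = dV4 (Fin.cons ((enorm4 x)⁻¹ • Jr x) τ) • ((enorm4 x)⁻¹ • φR x)) ∧
    -- on the sphere {‖X‖ = R}: Dx = (X⁻/‖X‖)·dS = (X⁻/R)·dS
    (0 < R → ∀ x : Fin 4 → ℝ, enorm4 x = R →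
      ∀ τ : Fin 3 → (Fin 4 → ℝ), (∀ k, dot x (τ k) = 0) →
        Dx τ = dV4 (Fin.cons (R⁻¹ • x) τ) • ((enorm4 x)⁻¹ • invol (φR x)) ∧
        Dx τ = dV4 (Fin.cons (R⁻¹ • x) τ) • (R⁻¹ • invol (φR x))) := by
  constructor
  · intro x _ hx τ hτ
    rw [Dx_eq_of_dotProduct_eq_zero (Jr_ne_zero hx) hτ, Jr_Jr, dotProduct_Jr_self, ← enorm4_sq,
      dV4_cons_smul, smul_smul]
    congr 1
    ring
  · intro hR x hxR τ hτ
    have hx : x ≠ 0 := by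
      rintro rfl
      simp [enorm4] at hxR
      exact hR.ne hxR
    have hsphere : Dx τ = dV4 (Fin.cons (R⁻¹ • x) τ) • (R⁻¹ • invol (φR x)) := by
      rw [Dx_eq_of_dotProduct_eq_zero hx hτ, invol_φR, ← enorm4_sq, hxR, dV4_cons_smul, smul_smul]
      congr 1
      ring
    exact ⟨hxR ▸ hsphere, hsphere⟩
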